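/- (Lemma 4-1) In the u2D Toda setting, the following reductions hold for all integers l, m, n (with τ_c formed from the columns φ(l,m,n+j)): τ(l+1,m,n) = max over 0 ≤ k_1 ≤ N of ( τ_c(−1, N−k_1) − k_1 δ ); τ(l,m−1,n) = max over 0 ≤ k_2 ≤ N of ( τ_c(k_2−1, N) − k_2 ε ); τ(l+1,m,n−1) = max over 0 ≤ k_1 ≤ N of ( τ_c(N−k_1−1, N) − k_1 δ ); τ(l,m−1,n+1) = max over 0 ≤ k_2 ≤ N of ( τ_c(−1, k_2) − k_2 ε ); τ(l,m,n) = τ_c(−1, N); and τ(l+1,m−1,n) = max over 0 ≤ k_1, k_2 ≤ N of ( Ψ(k_1,k_2) − k_1 δ − k_2 ε ), where Ψ(k_1,k_2) is defined by: if k_1 ≥ k_2 and N−k_1 ≥ k_2, then Ψ(k_1,k_2) = max over 0 ≤ i ≤ k_2 of τ_c(k_2−i−1, N−k_1+i); if N−k_1 ≥ k_2 ≥ k_1, then Ψ(k_1,k_2) = max over 0 ≤ i ≤ k_1 of τ_c(k_2−i−1, N−k_1+i); if k_1 ≥ k_2 ≥ N−k_1, then Ψ(k_1,k_2) = max over 0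 ≤ i ≤ N−k_1 of τ_c(i−1, N−k_1+k_2−i); and if k_2 ≥ N−k_1 and k_2 ≥ k_1, then Ψ(k_1,k_2) = max over 0 ≤ i ≤ N−k_2 of τ_c(N−k_1−i−1, k_2+i). -/

import Mathlib

/-- The ultradiscrete permanent of an `N × N` real matrix:
the maximum over all permutations `π` of `∑ i, A i (π i)`. -/
noncomputable def uperm {N : ℕ} (A : Matrix (Fin N) (Fin N) ℝ) : ℝ :=
  Finset.univ.sup' ⟨1, Finset.mem_univ 1⟩
    (fun π : Equiv.Perm (Fin N) => ∑ i, A i (π i))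

/-- Enumeration (in increasing order) of the column index set
`{a, a+1, …, a+N+1} ∖ {k₁, k₂}` (for `k₁ < k₂`). -/
def omitTwo (N : ℕ) (a k₁ k₂ : ℤ) : Fin N → ℤ :=
  fun j =>
    if (j.1 : ℤ) + a < k₁ then (j.1 : ℤ) + a
    else if (j.1 : ℤ) + a + 1 < k₂ then (j.1 : ℤ) + a + 1
    else (j.1 : ℤ) + a + 2

/-- u2D Toda setting: `φ_i(l,m,n) = max(η_i(l,m,n), η'_i(l,m,n))`. -/
noncomputable def phiT {N : ℕ} (δ ε : ℝ) (r c c' : Fin N → ℝ) (i : Fin N) (l m n : ℤ) : ℝ :=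
  max
    (max 0 (r i - δ) * (l : ℝ) - max 0 (-r i - ε) * (m : ℝ) + r i * (n : ℝ) + c i)
    (max 0 (-r i - δ) * (l : ℝ) - max 0 (r i - ε) * (m : ℝ) - r i * (n : ℝ) + c' i)

/-- u2D Toda tau function: the ultradiscrete permanent of the `N × N` matrix with
`(i, j)` entry `φ_i(l, m, n + j - 1)` (with `j` running over `1, …, N`). -/
noncomputable def tauT {N : ℕ} (δ ε : ℝ) (r c c' : Fin N → ℝ) (l m n : ℤ) : ℝ :=
  uperm (Matrix.of fun i j : Fin N => phiT δ ε r c c' i l m (n + (j.1 : ℤ)))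

/-- `τ_c(α, β)`: the ultradiscrete permanent of the `N × N` matrix whose columns are
the vectors `φ(l, m, n + j)` for `j ∈ {-1, 0, …, N} ∖ {α, β}` (symmetric in `α, β`). -/
noncomputable def taucT {N : ℕ} (δ ε : ℝ) (r c c' : Fin N → ℝ) (l m n : ℤ) (α β : ℤ) : ℝ :=
  uperm (Matrix.of fun i j : Fin N =>
    phiT δ ε r c c' i l m (n + omitTwo N (-1) (min α β) (max α β) j))

/-- `Ψ(k₁, k₂)` in the u2D Toda setting, defined by the four cases of Lemma 4-1. -/
noncomputable def PsiT {N : ℕ} (δ ε : ℝ) (r c c' : Fin N → ℝ)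
    (l m n : ℤ) (k₁ k₂ : ℕ) : ℝ :=
  if (k₂ : ℤ) ≤ (k₁ : ℤ) ∧ (k₂ : ℤ) ≤ (N : ℤ) - (k₁ : ℤ) then
    (Finset.range (k₂ + 1)).sup' Finset.nonempty_range_add_one
      (fun i => taucT δ ε r c c' l m n ((k₂ : ℤ) - i - 1) ((N : ℤ) - k₁ + i))
  else if (k₁ : ℤ) ≤ (k₂ : ℤ) ∧ (k₂ : ℤ) ≤ (N : ℤ) - (k₁ : ℤ) then
    (Finset.range (k₁ + 1)).sup' Finset.nonempty_range_add_one
      (fun i => taucT δ ε r c c' l m n ((k₂ : ℤ) - i - 1) ((N : ℤ) - k₁ + i))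
  else if (k₂ : ℤ) ≤ (k₁ : ℤ) ∧ (N : ℤ) - (k₁ : ℤ) ≤ (k₂ : ℤ) then
    (Finset.range (N - k₁ + 1)).sup' Finset.nonempty_range_add_one
      (fun i => taucT δ ε r c c' l m n ((i : ℤ) - 1) ((N : ℤ) - k₁ + k₂ - i))
  else
    (Finset.range (N - k₂ + 1)).sup' Finset.nonempty_range_add_one
      (fun i => taucT δ ε r c c' l m n ((N : ℤ) - k₁ - i - 1) ((k₂ : ℤ) + i))


open Finset

section core
variable {N : ℕ} (δ ε : ℝ) (r c c' : Fin N → ℝ) (l m : ℤ)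

/-- the tau-like function with arbitrary column indices -/
noncomputable def Fval (g : Fin N → ℤ) : ℝ :=
  uperm (Matrix.of fun i j : Fin N => phiT δ ε r c c' i l m (g j))

lemma uperm_le {A : Matrix (Fin N) (Fin N) ℝ} {x : ℝ}
    (h : ∀ π : Equiv.Perm (Fin N), ∑ i, A i (π i) ≤ x) : uperm A ≤ x :=
  Finset.sup'_le _ _ fun π _ => h π

lemma le_uperm (A : Matrix (Fin N) (Fin N) ℝ) (π : Equiv.Perm (Fin N)) :
    ∑ i, A i (π i) ≤ uperm A := by
  exact Finset.le_sup' (fun π : Equiv.Perm (Fin N) => ∑ i, A i (π i)) (Finset.mem_univ π)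

lemma phi_as_max (i : Fin N) :
    ∀ x : ℤ, phiT δ ε r c c' i l m x =
      max ((max 0 (r i - δ) * l - max 0 (-r i - ε) * m + c i) + r i * (x : ℝ))
          ((max 0 (-r i - δ) * l - max 0 (r i - ε) * m + c' i) - r i * (x : ℝ)) := by
  intro x
  unfold phiT
  congr 1 <;> ring

lemma convex_le (P Q R L x y z : ℝ) (hL0 : 0 ≤ L) (hL1 : L ≤ 1)
    (hz : z = L * x + (1 - L) * y) :
    max (P + R * z) (Q - R * z)
      ≤ L * max (P + R * x) (Q - R * x) + (1 - L) * max (P + R * y) (Q - R * y) := by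
  have h1 : P + R * z = L * (P + R * x) + (1 - L) * (P + R * y) := by rw [hz]; ring
  have h2 : Q - R * z = L * (Q - R * x) + (1 - L) * (Q - R * y) := by rw [hz]; ring
  apply max_le
  · rw [h1]
    exact add_le_add (mul_le_mul_of_nonneg_left (le_max_left _ _) hL0)
      (mul_le_mul_of_nonneg_left (le_max_left _ _) (by linarith))
  · rw [h2]
    exact add_le_add (mul_le_mul_of_nonneg_left (le_max_right _ _) hL0)
      (mul_le_mul_of_nonneg_left (le_max_right _ _) (by linarith))

lemma tworow (i₁ i₂ : Fin N) (a b a' b' : ℤ)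
    (h1 : a ≤ a') (h2 : a' ≤ b) (h3 : a ≤ b') (h4 : b' ≤ b) (h5 : a + b = a' + b') :
    phiT δ ε r c c' i₁ l m a' + phiT δ ε r c c' i₂ l m b'
      ≤ max (phiT δ ε r c c' i₁ l m a + phiT δ ε r c c' i₂ l m b)
            (phiT δ ε r c c' i₁ l m b + phiT δ ε r c c' i₂ l m a) := by
  rcases eq_or_lt_of_le (le_trans h1 h2 : a ≤ b) with hab | hab
  · have ha : a' = a := by omega
    have hb : b' = b := by omega
    rw [ha, hb]
    exact le_max_left _ _
  · have hba : (0:ℝ) < (b:ℝ) - (a:ℝ) := by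
      have : (a:ℝ) < (b:ℝ) := by exact_mod_cast hab
      linarith
    set L : ℝ := ((b:ℝ) - (a':ℝ)) / ((b:ℝ) - (a:ℝ)) with hL
    have hL0 : 0 ≤ L := by
      apply div_nonneg _ (le_of_lt hba)
      have : (a':ℝ) ≤ (b:ℝ) := by exact_mod_cast h2
      linarith
    have hL1 : L ≤ 1 := by
      rw [hL, div_le_one hba]
      have : (a:ℝ) ≤ (a':ℝ) := by exact_mod_cast h1
      linarith
    have hz1 : (a' : ℝ) = L * a + (1 - L) * b := by
      rw [hL]; field_simp; ring
    have hLb : L * ((b:ℝ) - a) = (b:ℝ) - a' := by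
      rw [hL]; field_simp
    have hz2 : (b' : ℝ) = (1 - L) * a + (1 - (1 - L)) * b := by
      have h5' : (a:ℝ) + b = a' + b' := by exact_mod_cast h5
      have e : (1-L)*(a:ℝ) + (1-(1-L))*b = (a:ℝ) + (b - a') := by
        rw [← hLb]; ring
      linarith [e]
    obtain ⟨P₁, Q₁, hPQ1⟩ : ∃ P Q : ℝ, ∀ x : ℤ, phiT δ ε r c c' i₁ l m x =
        max (P + r i₁ * (x:ℝ)) (Q - r i₁ * (x:ℝ)) :=
      ⟨_, _, phi_as_max δ ε r c c' l m i₁⟩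
    obtain ⟨P₂, Q₂, hPQ2⟩ : ∃ P Q : ℝ, ∀ x : ℤ, phiT δ ε r c c' i₂ l m x =
        max (P + r i₂ * (x:ℝ)) (Q - r i₂ * (x:ℝ)) :=
      ⟨_, _, phi_as_max δ ε r c c' l m i₂⟩
    rw [hPQ1, hPQ1, hPQ1, hPQ2, hPQ2, hPQ2]
    have c1 := convex_le P₁ Q₁ (r i₁) L (a:ℝ) (b:ℝ) (a':ℝ) hL0 hL1 hz1
    have c2 := convex_le P₂ Q₂ (r i₂) (1-L) (a:ℝ) (b:ℝ) (b':ℝ) (by linarith) (by linarith) hz2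
    set X₁ := max (P₁ + r i₁ * (a:ℝ)) (Q₁ - r i₁ * (a:ℝ))
    set Y₁ := max (P₁ + r i₁ * (b:ℝ)) (Q₁ - r i₁ * (b:ℝ))
    set X₂ := max (P₂ + r i₂ * (a:ℝ)) (Q₂ - r i₂ * (a:ℝ))
    set Y₂ := max (P₂ + r i₂ * (b:ℝ)) (Q₂ - r i₂ * (b:ℝ))
    have : L * (X₁ + Y₂) + (1 - L) * (Y₁ + X₂) ≤ max (X₁ + Y₂) (Y₁ + X₂) := by
      rcases le_total (X₁ + Y₂) (Y₁ + X₂) with h | h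
      · rw [max_eq_right h]; nlinarith
      · rw [max_eq_left h]; nlinarith
    calc max (P₁ + r i₁ * (a':ℝ)) (Q₁ - r i₁ * (a':ℝ)) +
          max (P₂ + r i₂ * (b':ℝ)) (Q₂ - r i₂ * (b':ℝ))
        ≤ (L * X₁ + (1 - L) * Y₁) + ((1-L) * X₂ + (1 - (1-L)) * Y₂) := add_le_add c1 c2
      _ = L * (X₁ + Y₂) + (1 - L) * (Y₁ + X₂) := by ring
      _ ≤ max (X₁ + Y₂) (Y₁ + X₂) := this

lemma sum_split {M : Type*} [AddCommMonoid M] (F : Fin N → M) (i₁ i₂ : Fin N) (h : i₁ ≠ i₂) :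
    ∑ i, F i = F i₁ + F i₂ + ∑ i ∈ (univ.erase i₁).erase i₂, F i := by
  have h2 : i₂ ∈ univ.erase i₁ := Finset.mem_erase.mpr ⟨h.symm, mem_univ i₂⟩
  rw [← Finset.add_sum_erase univ F (mem_univ i₁), ← Finset.add_sum_erase _ F h2, ← add_assoc]

lemma exchange (g : Fin N → ℤ) (p q : Fin N) (hpq : p ≠ q) (a' b' : ℤ)
    (h1 : min (g p) (g q) ≤ a') (h2 : a' ≤ max (g p) (g q))
    (h3 : min (g p) (g q) ≤ b') (h4 : b' ≤ max (g p) (g q))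
    (h5 : a' + b' = g p + g q) :
    Fval δ ε r c c' l m (Function.update (Function.update g p a') q b')
      ≤ Fval δ ε r c c' l m g := by
  apply uperm_le
  intro π
  set g' := Function.update (Function.update g p a') q b' with hg'
  set i₁ := π.symm p with hi₁
  set i₂ := π.symm q with hi₂
  have hi : i₁ ≠ i₂ := fun h => hpq (by
    have := congrArg π h; simpa [hi₁, hi₂] using this)
  have hπ1 : π i₁ = p := Equiv.apply_symm_apply π p
  have hπ2 : π i₂ = q := Equiv.apply_symm_apply π q
  have hg'p : g' p = a' := by
    rw [hg', Function.update_of_ne hpq, Function.update_self]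
  have hg'q : g' q = b' := by rw [hg', Function.update_self]
  have tail : ∀ i ∈ (univ.erase i₁).erase i₂, g' (π i) = g (π i) := by
    intro i hi'
    simp only [mem_erase] at hi'
    have hp : π i ≠ p := fun h => hi'.2.1 (by
      apply π.injective; rw [hπ1, h])
    have hq : π i ≠ q := fun h => hi'.1 (by
      apply π.injective; rw [hπ2, h])
    rw [hg', Function.update_of_ne hq, Function.update_of_ne hp]
  set S := ∑ i ∈ (univ.erase i₁).erase i₂, phiT δ ε r c c' i l m (g (π i)) with hS
  have split1 : ∑ i, phiT δ ε r c c' i l m (g' (π i))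
      = phiT δ ε r c c' i₁ l m a' + phiT δ ε r c c' i₂ l m b' + S := by
    have := sum_split (fun i => phiT δ ε r c c' i l m (g' (π i))) i₁ i₂ hi
    rw [hπ1, hπ2, hg'p, hg'q] at this
    rw [this, hS]
    congr 1
    apply Finset.sum_congr rfl
    intro i hi'
    rw [tail i hi']
  have key := tworow δ ε r c c' l m i₁ i₂ (min (g p) (g q)) (max (g p) (g q)) a' b'
      h1 h2 h3 h4 (by rw [min_add_max]; omega)
  have perm1 : phiT δ ε r c c' i₁ l m (g p) + phiT δ ε r c c' i₂ l m (g q) + S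
      ≤ Fval δ ε r c c' l m g := by
    have hle := le_uperm (Matrix.of fun i j : Fin N => phiT δ ε r c c' i l m (g j)) π
    have e : ∑ i, (Matrix.of fun i j : Fin N => phiT δ ε r c c' i l m (g j)) i (π i)
        = phiT δ ε r c c' i₁ l m (g p) + phiT δ ε r c c' i₂ l m (g q) + S := by
      simp only [Matrix.of_apply]
      have := sum_split (fun i => phiT δ ε r c c' i l m (g (π i))) i₁ i₂ hi
      rw [hπ1, hπ2] at this
      rw [this, hS]
    rw [e] at hle
    exact hle
  have perm2 : phiT δ ε r c c' i₁ l m (g q) + phiT δ ε r c c' i₂ l m (g p) + S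
      ≤ Fval δ ε r c c' l m g := by
    set π' : Equiv.Perm (Fin N) := π.trans (Equiv.swap p q) with hπ'
    have hle := le_uperm (Matrix.of fun i j : Fin N => phiT δ ε r c c' i l m (g j)) π'
    have e : ∑ i, (Matrix.of fun i j : Fin N => phiT δ ε r c c' i l m (g j)) i (π' i)
        = phiT δ ε r c c' i₁ l m (g q) + phiT δ ε r c c' i₂ l m (g p) + S := by
      simp only [Matrix.of_apply]
      have hsp := sum_split (fun i => phiT δ ε r c c' i l m (g (π' i))) i₁ i₂ hi
      have e1 : π' i₁ = q := by rw [hπ']; simp [hπ1]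
      have e2 : π' i₂ = p := by rw [hπ']; simp [hπ2]
      rw [e1, e2] at hsp
      rw [hsp, hS]
      congr 1
      apply Finset.sum_congr rfl
      intro i hi'
      simp only [mem_erase] at hi'
      have hp : π i ≠ p := fun h => hi'.2.1 (by apply π.injective; rw [hπ1, h])
      have hq : π i ≠ q := fun h => hi'.1 (by apply π.injective; rw [hπ2, h])
      have : π' i = π i := by
        rw [hπ']; simp [Equiv.swap_apply_of_ne_of_ne hp hq]
      rw [this]
    rw [e] at hle
    exact hle
  have main : phiT δ ε r c c' i₁ l m a' + phiT δ ε r c c' i₂ l m b' + S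
      ≤ Fval δ ε r c c' l m g := by
    rcases le_total (g p) (g q) with hle | hle
    · rw [min_eq_left hle, max_eq_right hle] at key
      refine le_trans (add_le_add_left key S) ?_
      rcases max_cases (phiT δ ε r c c' i₁ l m (g p) + phiT δ ε r c c' i₂ l m (g q))
        (phiT δ ε r c c' i₁ l m (g q) + phiT δ ε r c c' i₂ l m (g p)) with ⟨h, _⟩ | ⟨h, _⟩ <;>
        rw [h]
      · exact perm1
      · exact perm2
    · rw [min_eq_right hle, max_eq_left hle] at key
      refine le_trans (add_le_add_left key S) ?_
      rcases max_cases (phiT δ ε r c c' i₁ l m (g q) + phiT δ ε r c c' i₂ l m (g p))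
        (phiT δ ε r c c' i₁ l m (g p) + phiT δ ε r c c' i₂ l m (g q)) with ⟨h, _⟩ | ⟨h, _⟩ <;>
        rw [h]
      · exact perm2
      · exact perm1
  calc ∑ i, (Matrix.of fun i j : Fin N => phiT δ ε r c c' i l m (g' j)) i (π i)
      = ∑ i, phiT δ ε r c c' i l m (g' (π i)) := by simp only [Matrix.of_apply]
    _ = phiT δ ε r c c' i₁ l m a' + phiT δ ε r c c' i₂ l m b' + S := split1
    _ ≤ Fval δ ε r c c' l m g := main

lemma card_filter_equiv (e : Equiv (Fin N) (Fin N)) (p : Fin N → Prop) [DecidablePred p] :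
    (univ.filter fun x => p (e x)).card = (univ.filter p).card := by
  apply Finset.card_bij (fun a _ => e a)
  · intro a ha
    simp only [mem_filter, mem_univ, true_and] at *
    exact ha
  · intro a _ b _ hab
    exact e.injective hab
  · intro b hb
    refine ⟨e.symm b, ?_, by simp⟩
    simp only [mem_filter, mem_univ, true_and] at *
    simpa using hb

lemma fin_filter_card (P : ℕ → Prop) [DecidablePred P] :
    (univ.filter (fun j : Fin N => P j.1)).card = ((range N).filter P).card := by
  rw [Finset.card_filter, Finset.card_filter]
  exact Fin.sum_univ_eq_sum_range (fun x => if P x then 1 else 0) N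

lemma cost_sum (P : Fin N → Prop) [DecidablePred P] (w : ℝ) :
    ∑ j, (if P j then w else 0) = ((univ.filter P).card : ℝ) * w := by
  rw [← Finset.sum_filter, Finset.sum_const, nsmul_eq_mul]

lemma key_max (A B rr dd : ℝ) :
    max (A + max 0 (rr - dd)) (B + max 0 (-rr - dd))
      = max (max A B) (max (A + rr) (B - rr) - dd) := by
  simp only [max_def]
  split_ifs <;> linarith

lemma sup'_bool (F : Bool → ℝ) :
    (univ : Finset Bool).sup' ⟨false, mem_univ false⟩ F = max (F false) (F true) := by
  apply le_antisymm
  · apply Finset.sup'_le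
    intro b _
    cases b
    · exact le_max_left _ _
    · exact le_max_right _ _
  · exact max_le (Finset.le_sup' F (mem_univ false)) (Finset.le_sup' F (mem_univ true))

lemma sup'_bool2 (F : Bool × Bool → ℝ) :
    (univ : Finset (Bool × Bool)).sup' ⟨(false, false), mem_univ _⟩ F
      = max (max (F (false, false)) (F (false, true)))
            (max (F (true, false)) (F (true, true))) := by
  apply le_antisymm
  · apply Finset.sup'_le
    intro b _
    rcases b with ⟨(_|_), (_|_)⟩
    · exact le_max_of_le_left (le_max_left _ _)
    · exact le_max_of_le_left (le_max_right _ _)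
    · exact le_max_of_le_right (le_max_left _ _)
    · exact le_max_of_le_right (le_max_right _ _)
  · exact max_le (max_le (Finset.le_sup' F (mem_univ _)) (Finset.le_sup' F (mem_univ _)))
      (max_le (Finset.le_sup' F (mem_univ _)) (Finset.le_sup' F (mem_univ _)))

lemma phi_l (i : Fin N) (x : ℤ) :
    phiT δ ε r c c' i (l+1) m x
      = max (phiT δ ε r c c' i l m x) (phiT δ ε r c c' i l m (x+1) - δ) := by
  have key := key_max (max 0 (r i - δ) * (l:ℝ) - max 0 (-r i - ε) * (m:ℝ) + r i * (x:ℝ) + c i)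
    (max 0 (-r i - δ) * (l:ℝ) - max 0 (r i - ε) * (m:ℝ) - r i * (x:ℝ) + c' i) (r i) δ
  have e1 : phiT δ ε r c c' i (l+1) m x
      = max ((max 0 (r i - δ) * (l:ℝ) - max 0 (-r i - ε) * (m:ℝ) + r i * (x:ℝ) + c i) + max 0 (r i - δ))
            ((max 0 (-r i - δ) * (l:ℝ) - max 0 (r i - ε) * (m:ℝ) - r i * (x:ℝ) + c' i) + max 0 (-r i - δ)) := by
    unfold phiT
    congr 1 <;> push_cast <;> ring
  have e3 : phiT δ ε r c c' i l m (x+1)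
      = max ((max 0 (r i - δ) * (l:ℝ) - max 0 (-r i - ε) * (m:ℝ) + r i * (x:ℝ) + c i) + r i)
            ((max 0 (-r i - δ) * (l:ℝ) - max 0 (r i - ε) * (m:ℝ) - r i * (x:ℝ) + c' i) - r i) := by
    unfold phiT
    congr 1 <;> push_cast <;> ring
  have e2 : phiT δ ε r c c' i l m x
      = max (max 0 (r i - δ) * (l:ℝ) - max 0 (-r i - ε) * (m:ℝ) + r i * (x:ℝ) + c i)
            (max 0 (-r i - δ) * (l:ℝ) - max 0 (r i - ε) * (m:ℝ) - r i * (x:ℝ) + c' i) := rfl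
  rw [e1, e2, e3]
  exact key

lemma phi_m (i : Fin N) (x : ℤ) :
    phiT δ ε r c c' i l (m-1) x
      = max (phiT δ ε r c c' i l m x) (phiT δ ε r c c' i l m (x-1) - ε) := by
  have key := key_max (max 0 (r i - δ) * (l:ℝ) - max 0 (-r i - ε) * (m:ℝ) + r i * (x:ℝ) + c i)
    (max 0 (-r i - δ) * (l:ℝ) - max 0 (r i - ε) * (m:ℝ) - r i * (x:ℝ) + c' i) (-r i) ε
  have e1 : phiT δ ε r c c' i l (m-1) x
      = max ((max 0 (r i - δ) * (l:ℝ) - max 0 (-r i - ε) * (m:ℝ) + r i * (x:ℝ) + c i) + max 0 (-r i - ε))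
            ((max 0 (-r i - δ) * (l:ℝ) - max 0 (r i - ε) * (m:ℝ) - r i * (x:ℝ) + c' i) + max 0 (-(-r i) - ε)) := by
    unfold phiT
    congr 1 <;> push_cast <;> ring_nf
  have e3 : phiT δ ε r c c' i l m (x-1)
      = max ((max 0 (r i - δ) * (l:ℝ) - max 0 (-r i - ε) * (m:ℝ) + r i * (x:ℝ) + c i) + -r i)
            ((max 0 (-r i - δ) * (l:ℝ) - max 0 (r i - ε) * (m:ℝ) - r i * (x:ℝ) + c' i) - -r i) := by
    unfold phiT
    congr 1 <;> push_cast <;> ring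
  have e2 : phiT δ ε r c c' i l m x
      = max (max 0 (r i - δ) * (l:ℝ) - max 0 (-r i - ε) * (m:ℝ) + r i * (x:ℝ) + c i)
            (max 0 (-r i - δ) * (l:ℝ) - max 0 (r i - ε) * (m:ℝ) - r i * (x:ℝ) + c' i) := rfl
  rw [e1, e2, e3]
  exact key

lemma sort_le (n : ℤ) (σ : Fin N → ℤ) (hσ : ∀ j, σ j = -1 ∨ σ j = 0 ∨ σ j = 1) :
    Fval δ ε r c c' l m (fun j => n + (j.1 : ℤ) + σ j)
      ≤ taucT δ ε r c c' l m n
          (((univ.filter fun j => σ j = -1).card : ℤ) - 1)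
          ((N : ℤ) - ((univ.filter fun j => σ j = 1).card : ℤ)) := by
  suffices H : ∀ (Mm : ℕ) (σ : Fin N → ℤ), (∀ j, σ j = -1 ∨ σ j = 0 ∨ σ j = 1) →
      (∑ j : Fin N, (N - 1 - j.1) * (σ j + 1).toNat) = Mm →
      Fval δ ε r c c' l m (fun j => n + (j.1 : ℤ) + σ j)
        ≤ taucT δ ε r c c' l m n
            (((univ.filter fun j => σ j = -1).card : ℤ) - 1)
            ((N : ℤ) - ((univ.filter fun j => σ j = 1).card : ℤ)) by
    exact H _ σ hσ rfl
  intro Mm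
  induction Mm using Nat.strong_induction_on with
  | _ Mm IH =>
  intro σ hσ hM
  by_cases hinv : ∃ j : Fin N, ∃ hj : j.1 + 1 < N, σ ⟨j.1 + 1, hj⟩ < σ j
  · obtain ⟨j, hj, hlt⟩ := hinv
    set j' : Fin N := ⟨j.1 + 1, hj⟩ with hj'def
    have hj1 : (j'.1 : ℤ) = (j.1 : ℤ) + 1 := by rw [hj'def]; push_cast; ring
    have hjj' : j ≠ j' := by
      intro h
      have := congrArg Fin.val h
      simp [hj'def] at this
    set σ' : Fin N → ℤ := fun x => σ (Equiv.swap j j' x) with hσ'def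
    have hσ'j : σ' j = σ j' := by rw [hσ'def]; simp
    have hσ'j' : σ' j' = σ j := by rw [hσ'def]; simp
    have hσ'other : ∀ x : Fin N, x ≠ j → x ≠ j' → σ' x = σ x := by
      intro x hx1 hx2
      rw [hσ'def]
      simp [Equiv.swap_apply_of_ne_of_ne hx1 hx2]
    have hσ'vals : ∀ x, σ' x = -1 ∨ σ' x = 0 ∨ σ' x = 1 := fun x => hσ _
    -- step inequality via exchange
    have step : Fval δ ε r c c' l m (fun x => n + (x.1 : ℤ) + σ x)
        ≤ Fval δ ε r c c' l m (fun x => n + (x.1 : ℤ) + σ' x) := by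
      have hupd : (fun x : Fin N => n + (x.1 : ℤ) + σ x)
          = Function.update (Function.update (fun x : Fin N => n + (x.1 : ℤ) + σ' x) j
              (n + (j.1 : ℤ) + σ j)) j' (n + (j'.1 : ℤ) + σ j') := by
        funext x
        by_cases hx2 : x = j'
        · subst hx2
          rw [Function.update_self]
        · rw [Function.update_of_ne hx2]
          by_cases hx1 : x = j
          · subst hx1
            rw [Function.update_self]
          · rw [Function.update_of_ne hx1, hσ'other x hx1 hx2]
      rw [hupd]
      refine exchange δ ε r c c' l m (fun x : Fin N => n + (x.1 : ℤ) + σ' x) j j' hjj'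
        (n + (j.1 : ℤ) + σ j) (n + (j'.1 : ℤ) + σ j') ?_ ?_ ?_ ?_ ?_ <;>
        simp only [hσ'j, hσ'j'] <;> omega
    -- counts are preserved
    have hcount : ∀ v : ℤ, (univ.filter fun x => σ' x = v).card
        = (univ.filter fun x => σ x = v).card := by
      intro v
      exact card_filter_equiv (Equiv.swap j j') (fun x => σ x = v)
    -- measure decreases
    have hmeas : (∑ x : Fin N, (N - 1 - x.1) * (σ' x + 1).toNat) < Mm := by
      rw [← hM]
      have split1 := sum_split (fun x : Fin N => (N - 1 - x.1) * (σ' x + 1).toNat) j j' hjj'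
      have split2 := sum_split (fun x : Fin N => (N - 1 - x.1) * (σ x + 1).toNat) j j' hjj'
      rw [split1, split2]
      have tails : (∑ x ∈ (univ.erase j).erase j', (N - 1 - x.1) * (σ' x + 1).toNat)
          = ∑ x ∈ (univ.erase j).erase j', (N - 1 - x.1) * (σ x + 1).toNat := by
        apply Finset.sum_congr rfl
        intro x hx
        simp only [mem_erase] at hx
        rw [hσ'other x hx.2.1 hx.1]
      rw [tails]
      apply Nat.add_lt_add_right
      rw [hσ'j, hσ'j']
      set A := (σ j + 1).toNat with hA
      set B := (σ j' + 1).toNat with hB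
      have hBA : B < A := by
        rcases hσ j with h1 | h1 | h1 <;> rcases hσ j' with h2 | h2 | h2 <;>
          rw [hA, hB] <;> omega
      have hw : N - 1 - j.1 = (N - 1 - (j.1 + 1)) + 1 := by omega
      rw [hw]
      have e1 : (N - 1 - (j.1+1) + 1) * B + (N - 1 - (j.1+1)) * A
          = (N - 1 - (j.1+1)) * (A + B) + B := by ring
      have e2 : (N - 1 - (j.1+1) + 1) * A + (N - 1 - (j.1+1)) * B
          = (N - 1 - (j.1+1)) * (A + B) + A := by ring
      rw [e1, e2]
      exact Nat.add_lt_add_left hBA _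
    have ih := IH _ hmeas σ' hσ'vals rfl
    rw [hcount (-1), hcount 1] at ih
    exact le_trans step ih
  · -- no inversion: σ is monotone
    push_neg at hinv
    have mono : ∀ d : ℕ, ∀ x y : Fin N, y.1 = x.1 + d → σ x ≤ σ y := by
      intro d
      induction d with
      | zero =>
        intro x y h
        have : x = y := Fin.ext (by omega)
        rw [this]
      | succ d ihd =>
        intro x y h
        have hyN : y.1 < N := y.isLt
        have hzlt : x.1 + d < N := by omega
        have h1 : σ x ≤ σ ⟨x.1 + d, hzlt⟩ := ihd x ⟨x.1 + d, hzlt⟩ rfl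
        have hz1 : x.1 + d + 1 < N := by omega
        have h2 : σ ⟨x.1 + d, hzlt⟩ ≤ σ ⟨x.1 + d + 1, hz1⟩ := hinv ⟨x.1 + d, hzlt⟩ hz1
        have hy : y = ⟨x.1 + d + 1, hz1⟩ := Fin.ext (show y.1 = x.1 + d + 1 by omega)
        rw [hy]
        omega
    have mono' : ∀ x y : Fin N, x.1 ≤ y.1 → σ x ≤ σ y := by
      intro x y h
      exact mono (y.1 - x.1) x y (by omega)
    set q := (univ.filter fun j => σ j = -1).card with hq
    set p := (univ.filter fun j => σ j = 1).card with hp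
    have hqN : q ≤ N := le_trans (card_filter_le _ _) (by simp)
    have hpN : p ≤ N := le_trans (card_filter_le _ _) (by simp)
    have hpq : p + q ≤ N := by
      have hdisj : Disjoint (univ.filter fun j : Fin N => σ j = 1)
          (univ.filter fun j : Fin N => σ j = -1) := by
        rw [Finset.disjoint_left]
        intro a ha hb
        simp only [mem_filter] at ha hb
        omega
      rw [hp, hq, ← Finset.card_union_of_disjoint hdisj]
      exact le_trans (Finset.card_le_univ _) (le_of_eq (by simp))
    -- classification
    have memA : ∀ j : Fin N, σ j = -1 ↔ j.1 < q := by
      have hdown : (univ.filter fun j : Fin N => σ j = -1)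
          = univ.filter fun j : Fin N => j.1 < q := by
        have hsub : (univ.filter fun j : Fin N => σ j = -1)
            ⊆ univ.filter fun j : Fin N => j.1 < q := by
          intro j hjmem
          simp only [mem_filter, mem_univ, true_and] at hjmem ⊢
          have hsub2 : (univ.filter fun i : Fin N => i.1 ≤ j.1)
              ⊆ univ.filter fun i : Fin N => σ i = -1 := by
            intro i hi
            simp only [mem_filter, mem_univ, true_and] at hi ⊢
            have := mono' i j hi
            rcases hσ i with h | h | h <;> omega
          have hcard2 : (univ.filter fun i : Fin N => i.1 ≤ j.1).card = j.1 + 1 := by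
            rw [fin_filter_card (fun x => x ≤ j.1)]
            have : (range N).filter (fun x => x ≤ j.1) = range (j.1 + 1) := by
              ext x
              simp only [mem_filter, mem_range]
              have := j.isLt
              omega
            rw [this, Finset.card_range]
          have := Finset.card_le_card hsub2
          rw [hcard2, ← hq] at this
          omega
        apply Finset.eq_of_subset_of_card_le hsub
        rw [fin_filter_card (fun x => x < q)]
        have : (range N).filter (fun x => x < q) = range q := by
          ext x
          simp only [mem_filter, mem_range]
          omega
        rw [this, Finset.card_range, ← hq]
      intro j
      constructor
      · intro h
        have : j ∈ univ.filter fun j : Fin N => j.1 < q := by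
          rw [← hdown]
          simp only [mem_filter, mem_univ, true_and]
          exact h
        simpa using this
      · intro h
        have : j ∈ univ.filter fun j : Fin N => σ j = -1 := by
          rw [hdown]
          simp only [mem_filter, mem_univ, true_and]
          exact h
        simpa using this
    have memB : ∀ j : Fin N, σ j = 1 ↔ N - p ≤ j.1 := by
      have hup : (univ.filter fun j : Fin N => σ j = 1)
          = univ.filter fun j : Fin N => N - p ≤ j.1 := by
        have hsub : (univ.filter fun j : Fin N => σ j = 1)
            ⊆ univ.filter fun j : Fin N => N - p ≤ j.1 := by
          intro j hjmem
          simp only [mem_filter, mem_univ, true_and] at hjmem ⊢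
          have hsub2 : (univ.filter fun i : Fin N => j.1 ≤ i.1)
              ⊆ univ.filter fun i : Fin N => σ i = 1 := by
            intro i hi
            simp only [mem_filter, mem_univ, true_and] at hi ⊢
            have := mono' j i hi
            rcases hσ i with h | h | h <;> omega
          have hcard2 : (univ.filter fun i : Fin N => j.1 ≤ i.1).card = N - j.1 := by
            rw [fin_filter_card (fun x => j.1 ≤ x)]
            have : (range N).filter (fun x => j.1 ≤ x) = Finset.Ico j.1 N := by
              ext x
              simp only [mem_filter, mem_range, Finset.mem_Ico]
              omega
            rw [this, Nat.card_Ico]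
          have := Finset.card_le_card hsub2
          rw [hcard2, ← hp] at this
          have := j.isLt
          omega
        apply Finset.eq_of_subset_of_card_le hsub
        rw [fin_filter_card (fun x => N - p ≤ x)]
        have : (range N).filter (fun x => N - p ≤ x) = Finset.Ico (N - p) N := by
          ext x
          simp only [mem_filter, mem_range, Finset.mem_Ico]
          omega
        rw [this, Nat.card_Ico, ← hp]
        omega
      intro j
      constructor
      · intro h
        have : j ∈ univ.filter fun j : Fin N => N - p ≤ j.1 := by
          rw [← hup]
          simp only [mem_filter, mem_univ, true_and]
          exact h
        simpa using this
      · intro h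
        have : j ∈ univ.filter fun j : Fin N => σ j = 1 := by
          rw [hup]
          simp only [mem_filter, mem_univ, true_and]
          exact h
        simpa using this
    -- the columns agree with the canonical enumeration
    have hcols : (fun j : Fin N => n + (j.1 : ℤ) + σ j)
        = (fun j : Fin N => n + omitTwo N (-1) (min ((q:ℤ)-1) ((N:ℤ)-(p:ℤ)))
            (max ((q:ℤ)-1) ((N:ℤ)-(p:ℤ))) j) := by
      have hminq : min ((q:ℤ)-1) ((N:ℤ)-(p:ℤ)) = (q:ℤ)-1 := by
        apply min_eq_left
        omega
      have hmaxq : max ((q:ℤ)-1) ((N:ℤ)-(p:ℤ)) = (N:ℤ)-(p:ℤ) := by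
        apply max_eq_right
        omega
      funext j
      rw [hminq, hmaxq]
      unfold omitTwo
      split_ifs with h1 h2
      · have hsj : σ j = -1 := (memA j).mpr (by omega)
        rw [hsj]
        ring
      · have hs1 : ¬ (j.1 < q) := by omega
        have hs2 : ¬ (N - p ≤ j.1) := by omega
        have hsj : σ j = 0 := by
          rcases hσ j with h | h | h
          · exact absurd ((memA j).mp h) hs1
          · exact h
          · exact absurd ((memB j).mp h) hs2
        rw [hsj]
        ring
      · have hs2 : N - p ≤ j.1 := by
          have := j.isLt
          omega
        have hsj : σ j = 1 := (memB j).mpr hs2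
        rw [hsj]
        ring
    rw [hcols]
    unfold Fval taucT
    exact le_refl _

lemma expand {K : Type} [Fintype K] [DecidableEq K] (k0 : K) (n : ℤ) (s : K → ℤ) (d : K → ℝ) :
    uperm (Matrix.of fun i j : Fin N =>
        (univ : Finset K).sup' ⟨k0, mem_univ k0⟩
          (fun t => phiT δ ε r c c' i l m (n + (j.1:ℤ) + s t) + d t))
      = (univ : Finset (Fin N → K)).sup' ⟨(fun _ => k0), mem_univ _⟩
          (fun χ => Fval δ ε r c c' l m (fun j => n + (j.1:ℤ) + s (χ j)) + ∑ j, d (χ j)) := by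
  apply le_antisymm
  · apply uperm_le
    intro π
    have hch : ∀ i : Fin N, ∃ t : K,
        ((univ : Finset K).sup' ⟨k0, mem_univ k0⟩
          (fun t => phiT δ ε r c c' i l m (n + ((π i).1:ℤ) + s t) + d t))
        = phiT δ ε r c c' i l m (n + ((π i).1:ℤ) + s t) + d t := by
      intro i
      obtain ⟨t, _, ht⟩ := Finset.exists_mem_eq_sup'
        (⟨k0, mem_univ k0⟩ : (univ : Finset K).Nonempty)
        (fun t => phiT δ ε r c c' i l m (n + ((π i).1:ℤ) + s t) + d t)
      exact ⟨t, ht⟩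
    choose T hT using hch
    set χ : Fin N → K := fun j => T (π.symm j) with hχ
    have hTχ : ∀ i, χ (π i) = T i := by
      intro i
      rw [hχ]
      simp
    have e : ∑ i, (Matrix.of fun i j : Fin N =>
        (univ : Finset K).sup' ⟨k0, mem_univ k0⟩
          (fun t => phiT δ ε r c c' i l m (n + (j.1:ℤ) + s t) + d t)) i (π i)
        = (∑ i, phiT δ ε r c c' i l m (n + ((π i).1:ℤ) + s (χ (π i))))
          + ∑ i, d (χ (π i)) := by
      rw [← Finset.sum_add_distrib]
      apply Finset.sum_congr rfl
      intro i _
      simp only [Matrix.of_apply]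
      rw [hT i, hTχ i]
    rw [e]
    have e2 : ∑ i, d (χ (π i)) = ∑ j, d (χ j) := Equiv.sum_comp π (fun j => d (χ j))
    rw [e2]
    have hF : (∑ i, phiT δ ε r c c' i l m (n + ((π i).1:ℤ) + s (χ (π i))))
        ≤ Fval δ ε r c c' l m (fun j => n + (j.1:ℤ) + s (χ j)) := by
      have := le_uperm (Matrix.of fun i j : Fin N =>
        phiT δ ε r c c' i l m (n + (j.1:ℤ) + s (χ j))) π
      simpa [Fval] using this
    refine le_trans (add_le_add_left hF _) ?_
    exact Finset.le_sup' (fun χ : Fin N → K =>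
      Fval δ ε r c c' l m (fun j => n + (j.1:ℤ) + s (χ j)) + ∑ j, d (χ j)) (mem_univ χ)
  · apply Finset.sup'_le
    intro χ _
    have hπ : ∀ π : Equiv.Perm (Fin N),
        (∑ i, phiT δ ε r c c' i l m (n + ((π i).1:ℤ) + s (χ (π i)))) + ∑ j, d (χ j)
        ≤ uperm (Matrix.of fun i j : Fin N =>
            (univ : Finset K).sup' ⟨k0, mem_univ k0⟩
              (fun t => phiT δ ε r c c' i l m (n + (j.1:ℤ) + s t) + d t)) := by
      intro π
      have e2 : ∑ j, d (χ j) = ∑ i, d (χ (π i)) := (Equiv.sum_comp π (fun j => d (χ j))).symm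
      rw [e2, ← Finset.sum_add_distrib]
      refine le_trans (Finset.sum_le_sum ?_) (le_uperm _ π)
      intro i _
      simp only [Matrix.of_apply]
      exact Finset.le_sup'
        (fun t => phiT δ ε r c c' i l m (n + ((π i).1:ℤ) + s t) + d t) (mem_univ (χ (π i)))
    have hsup : Fval δ ε r c c' l m (fun j => n + (j.1:ℤ) + s (χ j))
        ≤ uperm (Matrix.of fun i j : Fin N =>
            (univ : Finset K).sup' ⟨k0, mem_univ k0⟩
              (fun t => phiT δ ε r c c' i l m (n + (j.1:ℤ) + s t) + d t))
          - ∑ j, d (χ j) := by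
      apply uperm_le
      intro π
      have := hπ π
      have h2 : (∑ i, (Matrix.of fun i j : Fin N =>
          phiT δ ε r c c' i l m (n + (j.1:ℤ) + s (χ j))) i (π i))
          = ∑ i, phiT δ ε r c c' i l m (n + ((π i).1:ℤ) + s (χ (π i))) := by
        simp only [Matrix.of_apply]
      rw [h2]
      linarith
    linarith [hsup]

lemma card_ge_threshold (k : ℕ) (hk : k ≤ N) :
    (univ.filter fun j : Fin N => (N:ℤ) - (k:ℤ) ≤ (j.1:ℤ)).card = k := by
  have e : (univ.filter fun j : Fin N => (N:ℤ) - (k:ℤ) ≤ (j.1:ℤ))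
      = univ.filter (fun j : Fin N => N - k ≤ j.1) := by
    ext x
    simp only [mem_filter, mem_univ, true_and]
    omega
  rw [e, fin_filter_card (fun x => N - k ≤ x)]
  have e2 : (range N).filter (fun x => N - k ≤ x) = Finset.Ico (N - k) N := by
    ext x
    simp only [mem_filter, mem_range, Finset.mem_Ico]
    omega
  rw [e2, Nat.card_Ico]
  omega

lemma card_lt_threshold (k : ℕ) (hk : k ≤ N) :
    (univ.filter fun j : Fin N => (j.1:ℤ) ≤ (k:ℤ) - 1).card = k := by
  have e : (univ.filter fun j : Fin N => (j.1:ℤ) ≤ (k:ℤ) - 1)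
      = univ.filter (fun j : Fin N => j.1 < k) := by
    ext x
    simp only [mem_filter, mem_univ, true_and]
    omega
  rw [e, fin_filter_card (fun x => x < k)]
  have e2 : (range N).filter (fun x => x < k) = range k := by
    ext x
    simp only [mem_filter, mem_range]
    omega
  rw [e2, Finset.card_range]

lemma claim5 (n : ℤ) : tauT δ ε r c c' l m n = taucT δ ε r c c' l m n (-1) (N:ℤ) := by
  unfold tauT taucT
  congr 1
  funext i j
  simp only [Matrix.of_apply]
  congr 1
  have hmin : min (-1 : ℤ) (N:ℤ) = -1 := min_eq_left (by omega)
  have hmax : max (-1 : ℤ) (N:ℤ) = (N:ℤ) := max_eq_right (by omega)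
  rw [hmin, hmax]
  unfold omitTwo
  have := j.isLt
  split_ifs <;> omega

lemma claim1 (n : ℤ) :
    tauT δ ε r c c' (l+1) m n
      = (range (N+1)).sup' nonempty_range_add_one
          (fun k₁ => taucT δ ε r c c' l m n (-1) ((N:ℤ) - k₁) - (k₁:ℝ) * δ) := by
  have hentry : (Matrix.of fun i j : Fin N => phiT δ ε r c c' i (l+1) m (n + (j.1:ℤ)))
      = Matrix.of fun i j : Fin N =>
          (univ : Finset Bool).sup' ⟨false, mem_univ false⟩
            (fun t => phiT δ ε r c c' i l m (n + (j.1:ℤ) + (if t then (1:ℤ) else 0))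
              + (if t then -δ else 0)) := by
    funext i j
    simp only [Matrix.of_apply]
    rw [sup'_bool, phi_l δ ε r c c' l m i (n + (j.1:ℤ))]
    norm_num
    rw [sub_eq_add_neg]
  unfold tauT
  rw [hentry, expand δ ε r c c' l m false n (fun t => if t then (1:ℤ) else 0)
    (fun t => if t then -δ else 0)]
  apply le_antisymm
  · apply Finset.sup'_le
    intro χ _
    set k := (univ.filter fun j => χ j = true).card with hk
    have hkN : k ≤ N := le_trans (card_filter_le _ _) (by simp)
    have hcost : (∑ j, (if χ j then -δ else (0:ℝ))) = -((k:ℝ) * δ) := by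
      rw [cost_sum (fun j => χ j = true) (-δ), ← hk]
      ring
    have hsort := sort_le δ ε r c c' l m n (fun j => if χ j then (1:ℤ) else 0)
      (fun j => by by_cases h : χ j <;> simp [h])
    have hc1 : (univ.filter fun j : Fin N => (if χ j then (1:ℤ) else 0) = -1) = ∅ := by
      apply Finset.filter_false_of_mem
      intro x _
      by_cases h : χ x <;> simp [h]
    have hc2 : (univ.filter fun j : Fin N => (if χ j then (1:ℤ) else 0) = 1)
        = univ.filter fun j => χ j = true := by
      ext x
      simp only [mem_filter, mem_univ, true_and]
      by_cases h : χ x <;> simp [h]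
    rw [hc1, hc2, ← hk] at hsort
    simp only [Finset.card_empty, Nat.cast_zero] at hsort
    rw [hcost]
    have hmem : k ∈ range (N+1) := mem_range.mpr (by omega)
    refine le_trans (add_le_add_left hsort _) ?_
    refine le_trans ?_ (Finset.le_sup' (fun k₁ : ℕ =>
      taucT δ ε r c c' l m n (-1) ((N:ℤ) - k₁) - (k₁:ℝ) * δ) hmem)
    have : ((0:ℤ) - 1) = (-1 : ℤ) := by ring
    rw [this]
    ring_nf
    exact le_refl _
  · apply Finset.sup'_le
    intro k hkmem
    have hkN : k ≤ N := by
      have := mem_range.mp hkmem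
      omega
    set χk : Fin N → Bool := fun j => decide ((N:ℤ) - (k:ℤ) ≤ (j.1:ℤ)) with hχk
    have hg : (fun j : Fin N => n + (j.1:ℤ) + (if χk j then (1:ℤ) else 0))
        = (fun j : Fin N => n + omitTwo N (-1) (min (-1) ((N:ℤ) - (k:ℤ)))
            (max (-1) ((N:ℤ) - (k:ℤ))) j) := by
      funext j
      have hmin : min (-1 : ℤ) ((N:ℤ) - (k:ℤ)) = -1 := min_eq_left (by omega)
      have hmax : max (-1 : ℤ) ((N:ℤ) - (k:ℤ)) = (N:ℤ) - (k:ℤ) := max_eq_right (by omega)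
      rw [hmin, hmax]
      have hj := j.isLt
      by_cases hb : χk j
      · rw [if_pos hb]
        rw [hχk] at hb
        simp only [decide_eq_true_eq] at hb
        unfold omitTwo
        split_ifs <;> omega
      · rw [if_neg hb]
        rw [hχk] at hb
        simp only [decide_eq_true_eq] at hb
        unfold omitTwo
        split_ifs <;> omega
    have hcount : (univ.filter fun j => χk j = true).card = k := by
      have e : (univ.filter fun j : Fin N => χk j = true)
          = univ.filter fun j : Fin N => (N:ℤ) - (k:ℤ) ≤ (j.1:ℤ) := by
        ext x
        simp only [mem_filter, mem_univ, true_and, hχk, decide_eq_true_eq]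
      rw [e]
      exact card_ge_threshold k hkN
    have hcost : (∑ j, (if χk j then -δ else (0:ℝ))) = -((k:ℝ) * δ) := by
      rw [cost_sum (fun j => χk j = true) (-δ), hcount]
      ring
    have hval : Fval δ ε r c c' l m (fun j => n + (j.1:ℤ) + (if χk j then (1:ℤ) else 0))
        = taucT δ ε r c c' l m n (-1) ((N:ℤ) - (k:ℤ)) := by
      unfold Fval taucT
      rw [hg]
    refine le_trans ?_ (Finset.le_sup' (fun χ : Fin N → Bool =>
      Fval δ ε r c c' l m (fun j => n + (j.1:ℤ) + (if χ j then (1:ℤ) else 0))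
        + ∑ j, (if χ j then -δ else (0:ℝ))) (mem_univ χk))
    rw [hval, hcost]
    ring_nf
    exact le_refl _

lemma claim2 (n : ℤ) :
    tauT δ ε r c c' l (m-1) n
      = (range (N+1)).sup' nonempty_range_add_one
          (fun k₂ => taucT δ ε r c c' l m n ((k₂:ℤ) - 1) (N:ℤ) - (k₂:ℝ) * ε) := by
  have hentry : (Matrix.of fun i j : Fin N => phiT δ ε r c c' i l (m-1) (n + (j.1:ℤ)))
      = Matrix.of fun i j : Fin N =>
          (univ : Finset Bool).sup' ⟨false, mem_univ false⟩
            (fun t => phiT δ ε r c c' i l m (n + (j.1:ℤ) + (if t then (-1:ℤ) else 0))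
              + (if t then -ε else 0)) := by
    funext i j
    simp only [Matrix.of_apply]
    rw [sup'_bool, phi_m δ ε r c c' l m i (n + (j.1:ℤ))]
    norm_num
    rw [sub_eq_add_neg]
    ring_nf
  unfold tauT
  rw [hentry, expand δ ε r c c' l m false n (fun t => if t then (-1:ℤ) else 0)
    (fun t => if t then -ε else 0)]
  apply le_antisymm
  · apply Finset.sup'_le
    intro χ _
    set k := (univ.filter fun j => χ j = true).card with hk
    have hkN : k ≤ N := le_trans (card_filter_le _ _) (by simp)
    have hcost : (∑ j, (if χ j then -ε else (0:ℝ))) = -((k:ℝ) * ε) := by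
      rw [cost_sum (fun j => χ j = true) (-ε), ← hk]
      ring
    have hsort := sort_le δ ε r c c' l m n (fun j => if χ j then (-1:ℤ) else 0)
      (fun j => by by_cases h : χ j <;> simp [h])
    have hc1 : (univ.filter fun j : Fin N => (if χ j then (-1:ℤ) else 0) = -1)
        = univ.filter fun j => χ j = true := by
      ext x
      simp only [mem_filter, mem_univ, true_and]
      by_cases h : χ x <;> simp [h]
    have hc2 : (univ.filter fun j : Fin N => (if χ j then (-1:ℤ) else 0) = 1) = ∅ := by
      apply Finset.filter_false_of_mem
      intro x _
      by_cases h : χ x <;> simp [h]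
    rw [hc1, hc2, ← hk] at hsort
    simp only [Finset.card_empty, Nat.cast_zero, sub_zero] at hsort
    rw [hcost]
    have hmem : k ∈ range (N+1) := mem_range.mpr (by omega)
    refine le_trans (add_le_add_left hsort _) ?_
    refine le_trans ?_ (Finset.le_sup' (fun k₂ : ℕ =>
      taucT δ ε r c c' l m n ((k₂:ℤ) - 1) (N:ℤ) - (k₂:ℝ) * ε) hmem)
    ring_nf
    exact le_refl _
  · apply Finset.sup'_le
    intro k hkmem
    have hkN : k ≤ N := by
      have := mem_range.mp hkmem
      omega
    set χk : Fin N → Bool := fun j => decide ((j.1:ℤ) ≤ (k:ℤ) - 1) with hχk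
    have hg : (fun j : Fin N => n + (j.1:ℤ) + (if χk j then (-1:ℤ) else 0))
        = (fun j : Fin N => n + omitTwo N (-1) (min ((k:ℤ) - 1) (N:ℤ))
            (max ((k:ℤ) - 1) (N:ℤ)) j) := by
      funext j
      have hmin : min ((k:ℤ) - 1) (N:ℤ) = (k:ℤ) - 1 := min_eq_left (by omega)
      have hmax : max ((k:ℤ) - 1) (N:ℤ) = (N:ℤ) := max_eq_right (by omega)
      rw [hmin, hmax]
      have hj := j.isLt
      by_cases hb : χk j
      · rw [if_pos hb]
        rw [hχk] at hb
        simp only [decide_eq_true_eq] at hb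
        unfold omitTwo
        split_ifs <;> omega
      · rw [if_neg hb]
        rw [hχk] at hb
        simp only [decide_eq_true_eq] at hb
        unfold omitTwo
        split_ifs <;> omega
    have hcount : (univ.filter fun j => χk j = true).card = k := by
      have e : (univ.filter fun j : Fin N => χk j = true)
          = univ.filter fun j : Fin N => (j.1:ℤ) ≤ (k:ℤ) - 1 := by
        ext x
        simp only [mem_filter, mem_univ, true_and, hχk, decide_eq_true_eq]
      rw [e]
      exact card_lt_threshold k hkN
    have hcost : (∑ j, (if χk j then -ε else (0:ℝ))) = -((k:ℝ) * ε) := by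
      rw [cost_sum (fun j => χk j = true) (-ε), hcount]
      ring
    have hval : Fval δ ε r c c' l m (fun j => n + (j.1:ℤ) + (if χk j then (-1:ℤ) else 0))
        = taucT δ ε r c c' l m n ((k:ℤ) - 1) (N:ℤ) := by
      unfold Fval taucT
      rw [hg]
    refine le_trans ?_ (Finset.le_sup' (fun χ : Fin N → Bool =>
      Fval δ ε r c c' l m (fun j => n + (j.1:ℤ) + (if χ j then (-1:ℤ) else 0))
        + ∑ j, (if χ j then -ε else (0:ℝ))) (mem_univ χk))
    rw [hval, hcost]
    ring_nf
    exact le_refl _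

lemma claim3 (n : ℤ) :
    tauT δ ε r c c' (l+1) m (n-1)
      = (range (N+1)).sup' nonempty_range_add_one
          (fun k₁ => taucT δ ε r c c' l m n ((N:ℤ) - k₁ - 1) (N:ℤ) - (k₁:ℝ) * δ) := by
  have hentry : (Matrix.of fun i j : Fin N => phiT δ ε r c c' i (l+1) m ((n-1) + (j.1:ℤ)))
      = Matrix.of fun i j : Fin N =>
          (univ : Finset Bool).sup' ⟨false, mem_univ false⟩
            (fun t => phiT δ ε r c c' i l m (n + (j.1:ℤ) + (if t then (0:ℤ) else -1))
              + (if t then -δ else 0)) := by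
    funext i j
    simp only [Matrix.of_apply]
    rw [sup'_bool, phi_l δ ε r c c' l m i ((n-1) + (j.1:ℤ))]
    norm_num
    rw [show n - 1 + (j.1:ℤ) + 1 = n + (j.1:ℤ) from by ring,
      show n - 1 + (j.1:ℤ) = n + (j.1:ℤ) + -1 from by ring, sub_eq_add_neg]
  unfold tauT
  rw [hentry, expand δ ε r c c' l m false n (fun t => if t then (0:ℤ) else -1)
    (fun t => if t then -δ else 0)]
  apply le_antisymm
  · apply Finset.sup'_le
    intro χ _
    set k := (univ.filter fun j => χ j = true).card with hk
    have hkN : k ≤ N := le_trans (card_filter_le _ _) (by simp)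
    have hcost : (∑ j, (if χ j then -δ else (0:ℝ))) = -((k:ℝ) * δ) := by
      rw [cost_sum (fun j => χ j = true) (-δ), ← hk]
      ring
    have hsort := sort_le δ ε r c c' l m n (fun j => if χ j then (0:ℤ) else -1)
      (fun j => by by_cases h : χ j <;> simp [h])
    have hfalse : (univ.filter fun j : Fin N => χ j = false).card = N - k := by
      have hsplit := Finset.card_filter_add_card_filter_not
        (s := (univ : Finset (Fin N))) (p := fun j : Fin N => χ j = true)
      have e : (univ.filter fun j : Fin N => ¬ (χ j = true))
          = univ.filter fun j : Fin N => χ j = false := by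
        ext x
        simp only [mem_filter, mem_univ, true_and, Bool.not_eq_true]
      rw [e, ← hk] at hsplit
      simp only [Finset.card_univ, Fintype.card_fin] at hsplit
      omega
    have hc1 : (univ.filter fun j : Fin N => (if χ j then (0:ℤ) else -1) = -1)
        = univ.filter fun j => χ j = false := by
      ext x
      simp only [mem_filter, mem_univ, true_and]
      by_cases h : χ x <;> simp [h]
    have hc2 : (univ.filter fun j : Fin N => (if χ j then (0:ℤ) else -1) = 1) = ∅ := by
      apply Finset.filter_false_of_mem
      intro x _
      by_cases h : χ x <;> simp [h]
    rw [hc1, hc2, hfalse] at hsort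
    simp only [Finset.card_empty, Nat.cast_zero, sub_zero] at hsort
    have harg : ((N - k : ℕ) : ℤ) - 1 = (N:ℤ) - (k:ℤ) - 1 := by omega
    rw [harg] at hsort
    rw [hcost]
    have hmem : k ∈ range (N+1) := mem_range.mpr (by omega)
    refine le_trans (add_le_add_left hsort _) ?_
    refine le_trans ?_ (Finset.le_sup' (fun k₁ : ℕ =>
      taucT δ ε r c c' l m n ((N:ℤ) - k₁ - 1) (N:ℤ) - (k₁:ℝ) * δ) hmem)
    ring_nf
    exact le_refl _
  · apply Finset.sup'_le
    intro k hkmem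
    have hkN : k ≤ N := by
      have := mem_range.mp hkmem
      omega
    set χk : Fin N → Bool := fun j => decide ((N:ℤ) - (k:ℤ) ≤ (j.1:ℤ)) with hχk
    have hg : (fun j : Fin N => n + (j.1:ℤ) + (if χk j then (0:ℤ) else -1))
        = (fun j : Fin N => n + omitTwo N (-1) (min ((N:ℤ) - k - 1) (N:ℤ))
            (max ((N:ℤ) - k - 1) (N:ℤ)) j) := by
      funext j
      have hmin : min ((N:ℤ) - k - 1) (N:ℤ) = (N:ℤ) - k - 1 := min_eq_left (by omega)
      have hmax : max ((N:ℤ) - k - 1) (N:ℤ) = (N:ℤ) := max_eq_right (by omega)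
      rw [hmin, hmax]
      have hj := j.isLt
      by_cases hb : χk j
      · rw [if_pos hb]
        rw [hχk] at hb
        simp only [decide_eq_true_eq] at hb
        unfold omitTwo
        split_ifs <;> omega
      · rw [if_neg hb]
        rw [hχk] at hb
        simp only [decide_eq_true_eq] at hb
        unfold omitTwo
        split_ifs <;> omega
    have hcount : (univ.filter fun j => χk j = true).card = k := by
      have e : (univ.filter fun j : Fin N => χk j = true)
          = univ.filter fun j : Fin N => (N:ℤ) - (k:ℤ) ≤ (j.1:ℤ) := by
        ext x
        simp only [mem_filter, mem_univ, true_and, hχk, decide_eq_true_eq]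
      rw [e]
      exact card_ge_threshold k hkN
    have hcost : (∑ j, (if χk j then -δ else (0:ℝ))) = -((k:ℝ) * δ) := by
      rw [cost_sum (fun j => χk j = true) (-δ), hcount]
      ring
    have hval : Fval δ ε r c c' l m (fun j => n + (j.1:ℤ) + (if χk j then (0:ℤ) else -1))
        = taucT δ ε r c c' l m n ((N:ℤ) - k - 1) (N:ℤ) := by
      unfold Fval taucT
      rw [hg]
    refine le_trans ?_ (Finset.le_sup' (fun χ : Fin N → Bool =>
      Fval δ ε r c c' l m (fun j => n + (j.1:ℤ) + (if χ j then (0:ℤ) else -1))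
        + ∑ j, (if χ j then -δ else (0:ℝ))) (mem_univ χk))
    rw [hval, hcost]
    ring_nf
    exact le_refl _

lemma claim4 (n : ℤ) :
    tauT δ ε r c c' l (m-1) (n+1)
      = (range (N+1)).sup' nonempty_range_add_one
          (fun k₂ => taucT δ ε r c c' l m n (-1) (k₂:ℤ) - (k₂:ℝ) * ε) := by
  have hentry : (Matrix.of fun i j : Fin N => phiT δ ε r c c' i l (m-1) ((n+1) + (j.1:ℤ)))
      = Matrix.of fun i j : Fin N =>
          (univ : Finset Bool).sup' ⟨false, mem_univ false⟩
            (fun t => phiT δ ε r c c' i l m (n + (j.1:ℤ) + (if t then (0:ℤ) else 1))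
              + (if t then -ε else 0)) := by
    funext i j
    simp only [Matrix.of_apply]
    rw [sup'_bool, phi_m δ ε r c c' l m i ((n+1) + (j.1:ℤ))]
    norm_num
    rw [show n + 1 + (j.1:ℤ) - 1 = n + (j.1:ℤ) from by ring,
      show n + 1 + (j.1:ℤ) = n + (j.1:ℤ) + 1 from by ring, sub_eq_add_neg]
  unfold tauT
  rw [hentry, expand δ ε r c c' l m false n (fun t => if t then (0:ℤ) else 1)
    (fun t => if t then -ε else 0)]
  apply le_antisymm
  · apply Finset.sup'_le
    intro χ _
    set k := (univ.filter fun j => χ j = true).card with hk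
    have hkN : k ≤ N := le_trans (card_filter_le _ _) (by simp)
    have hcost : (∑ j, (if χ j then -ε else (0:ℝ))) = -((k:ℝ) * ε) := by
      rw [cost_sum (fun j => χ j = true) (-ε), ← hk]
      ring
    have hsort := sort_le δ ε r c c' l m n (fun j => if χ j then (0:ℤ) else 1)
      (fun j => by by_cases h : χ j <;> simp [h])
    have hfalse : (univ.filter fun j : Fin N => χ j = false).card = N - k := by
      have hsplit := Finset.card_filter_add_card_filter_not
        (s := (univ : Finset (Fin N))) (p := fun j : Fin N => χ j = true)
      have e : (univ.filter fun j : Fin N => ¬ (χ j = true))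
          = univ.filter fun j : Fin N => χ j = false := by
        ext x
        simp only [mem_filter, mem_univ, true_and, Bool.not_eq_true]
      rw [e, ← hk] at hsplit
      simp only [Finset.card_univ, Fintype.card_fin] at hsplit
      omega
    have hc1 : (univ.filter fun j : Fin N => (if χ j then (0:ℤ) else 1) = -1) = ∅ := by
      apply Finset.filter_false_of_mem
      intro x _
      by_cases h : χ x <;> simp [h]
    have hc2 : (univ.filter fun j : Fin N => (if χ j then (0:ℤ) else 1) = 1)
        = univ.filter fun j => χ j = false := by
      ext x
      simp only [mem_filter, mem_univ, true_and]
      by_cases h : χ x <;> simp [h]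
    rw [hc1, hc2, hfalse] at hsort
    simp only [Finset.card_empty, Nat.cast_zero] at hsort
    have harg : (N:ℤ) - ((N - k : ℕ) : ℤ) = (k:ℤ) := by omega
    rw [harg] at hsort
    rw [hcost]
    have hmem : k ∈ range (N+1) := mem_range.mpr (by omega)
    refine le_trans (add_le_add_left hsort _) ?_
    refine le_trans ?_ (Finset.le_sup' (fun k₂ : ℕ =>
      taucT δ ε r c c' l m n (-1) (k₂:ℤ) - (k₂:ℝ) * ε) hmem)
    have : ((0:ℤ) - 1) = (-1 : ℤ) := by ring
    rw [this]
    ring_nf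
    exact le_refl _
  · apply Finset.sup'_le
    intro k hkmem
    have hkN : k ≤ N := by
      have := mem_range.mp hkmem
      omega
    set χk : Fin N → Bool := fun j => decide ((j.1:ℤ) ≤ (k:ℤ) - 1) with hχk
    have hg : (fun j : Fin N => n + (j.1:ℤ) + (if χk j then (0:ℤ) else 1))
        = (fun j : Fin N => n + omitTwo N (-1) (min (-1) ((k:ℤ)))
            (max (-1) ((k:ℤ))) j) := by
      funext j
      have hmin : min (-1:ℤ) ((k:ℤ)) = (-1:ℤ) := min_eq_left (by omega)
      have hmax : max (-1:ℤ) ((k:ℤ)) = (k:ℤ) := max_eq_right (by omega)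
      rw [hmin, hmax]
      have hj := j.isLt
      by_cases hb : χk j
      · rw [if_pos hb]
        rw [hχk] at hb
        simp only [decide_eq_true_eq] at hb
        unfold omitTwo
        split_ifs <;> omega
      · rw [if_neg hb]
        rw [hχk] at hb
        simp only [decide_eq_true_eq] at hb
        unfold omitTwo
        split_ifs <;> omega
    have hcount : (univ.filter fun j => χk j = true).card = k := by
      have e : (univ.filter fun j : Fin N => χk j = true)
          = univ.filter fun j : Fin N => (j.1:ℤ) ≤ (k:ℤ) - 1 := by
        ext x
        simp only [mem_filter, mem_univ, true_and, hχk, decide_eq_true_eq]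
      rw [e]
      exact card_lt_threshold k hkN
    have hcost : (∑ j, (if χk j then -ε else (0:ℝ))) = -((k:ℝ) * ε) := by
      rw [cost_sum (fun j => χk j = true) (-ε), hcount]
      ring
    have hval : Fval δ ε r c c' l m (fun j => n + (j.1:ℤ) + (if χk j then (0:ℤ) else 1))
        = taucT δ ε r c c' l m n (-1) (k:ℤ) := by
      unfold Fval taucT
      rw [hg]
    refine le_trans ?_ (Finset.le_sup' (fun χ : Fin N → Bool =>
      Fval δ ε r c c' l m (fun j => n + (j.1:ℤ) + (if χ j then (0:ℤ) else 1))
        + ∑ j, (if χ j then -ε else (0:ℝ))) (mem_univ χk))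
    rw [hval, hcost]
    ring_nf
    exact le_refl _

lemma card_int_interval (a : ℤ) (b : ℕ) (hb : b ≤ N) :
    (univ.filter fun j : Fin N => a < (j.1:ℤ) ∧ (j.1:ℤ) ≤ (b:ℤ) - 1).card
      = b - (a+1).toNat := by
  have e : (univ.filter fun j : Fin N => a < (j.1:ℤ) ∧ (j.1:ℤ) ≤ (b:ℤ) - 1)
      = univ.filter (fun j : Fin N => (a+1).toNat ≤ j.1 ∧ j.1 < b) := by
    ext x
    simp only [mem_filter, mem_univ, true_and]
    omega
  rw [e, fin_filter_card (fun x => (a+1).toNat ≤ x ∧ x < b)]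
  have e2 : (range N).filter (fun x => (a+1).toNat ≤ x ∧ x < b)
      = Finset.Ico ((a+1).toNat) b := by
    ext x
    simp only [mem_filter, mem_range, Finset.mem_Ico]
    omega
  rw [e2, Nat.card_Ico]

lemma card_int_ge (b : ℤ) (hb0 : 0 ≤ b) :
    (univ.filter fun j : Fin N => b ≤ (j.1:ℤ)).card = N - b.toNat := by
  have e : (univ.filter fun j : Fin N => b ≤ (j.1:ℤ))
      = univ.filter (fun j : Fin N => b.toNat ≤ j.1) := by
    ext x
    simp only [mem_filter, mem_univ, true_and]
    omega
  rw [e, fin_filter_card (fun x => b.toNat ≤ x)]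
  have e2 : (range N).filter (fun x => b.toNat ≤ x) = Finset.Ico (b.toNat) N := by
    ext x
    simp only [mem_filter, mem_range, Finset.mem_Ico]
    omega
  rw [e2, Nat.card_Ico]

lemma ge6 (n : ℤ) (k1 k2 : ℕ) (hk1N : k1 ≤ N) (hk2N : k2 ≤ N) (α β : ℤ)
    (hsum : α + β = (N:ℤ) - 1 - (k1:ℤ) + (k2:ℤ))
    (hα1 : -1 ≤ α) (hβN : β ≤ (N:ℤ)) (hαk2 : α ≤ (k2:ℤ) - 1) (hk2β : (k2:ℤ) ≤ β)
    (hαNk1 : α ≤ (N:ℤ) - (k1:ℤ) - 1) :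
    taucT δ ε r c c' l m n α β - (k1:ℝ) * δ - (k2:ℝ) * ε
      ≤ (univ : Finset (Fin N → Bool × Bool)).sup' ⟨(fun _ => (false, false)), mem_univ _⟩
          (fun χ => Fval δ ε r c c' l m
            (fun j => n + (j.1:ℤ) + ((if (χ j).1 then (1:ℤ) else 0) - (if (χ j).2 then (1:ℤ) else 0)))
            + ∑ j, ((if (χ j).1 then -δ else 0) + (if (χ j).2 then -ε else (0:ℝ)))) := by
  have hαβ : α < β := by omega
  set χc : Fin N → Bool × Bool := fun j =>
    (decide ((α < (j.1:ℤ) ∧ (j.1:ℤ) ≤ (k2:ℤ) - 1) ∨ β ≤ (j.1:ℤ)),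
     decide ((j.1:ℤ) ≤ (k2:ℤ) - 1)) with hχc
  have hfst : ∀ j : Fin N, ((χc j).1 = true)
      ↔ ((α < (j.1:ℤ) ∧ (j.1:ℤ) ≤ (k2:ℤ) - 1) ∨ β ≤ (j.1:ℤ)) := by
    intro j
    rw [hχc]
    simp
  have hsnd : ∀ j : Fin N, ((χc j).2 = true) ↔ ((j.1:ℤ) ≤ (k2:ℤ) - 1) := by
    intro j
    rw [hχc]
    simp
  have hg : (fun j : Fin N => n + (j.1:ℤ)
        + ((if (χc j).1 then (1:ℤ) else 0) - (if (χc j).2 then (1:ℤ) else 0)))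
      = (fun j : Fin N => n + omitTwo N (-1) (min α β) (max α β) j) := by
    funext j
    have hmin : min α β = α := min_eq_left (le_of_lt hαβ)
    have hmax : max α β = β := max_eq_right (le_of_lt hαβ)
    rw [hmin, hmax]
    have hj := j.isLt
    by_cases hb1 : (χc j).1
    · rw [if_pos hb1]
      rw [hfst j] at hb1
      by_cases hb2 : (χc j).2
      · rw [if_pos hb2]
        rw [hsnd j] at hb2
        unfold omitTwo
        split_ifs <;> omega
      · rw [if_neg hb2]
        rw [hsnd j] at hb2
        unfold omitTwo
        split_ifs <;> omega
    · rw [if_neg hb1]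
      rw [hfst j] at hb1
      by_cases hb2 : (χc j).2
      · rw [if_pos hb2]
        rw [hsnd j] at hb2
        unfold omitTwo
        split_ifs <;> omega
      · rw [if_neg hb2]
        rw [hsnd j] at hb2
        unfold omitTwo
        split_ifs <;> omega
  have hcount2 : (univ.filter fun j => (χc j).2 = true).card = k2 := by
    have e : (univ.filter fun j : Fin N => (χc j).2 = true)
        = univ.filter fun j : Fin N => (j.1:ℤ) ≤ (k2:ℤ) - 1 := by
      ext x
      simp only [mem_filter, mem_univ, true_and, hsnd]
    rw [e]
    exact card_lt_threshold k2 hk2N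
  have hcount1 : (univ.filter fun j => (χc j).1 = true).card = k1 := by
    have e : (univ.filter fun j : Fin N => (χc j).1 = true)
        = (univ.filter fun j : Fin N => α < (j.1:ℤ) ∧ (j.1:ℤ) ≤ (k2:ℤ) - 1)
          ∪ (univ.filter fun j : Fin N => β ≤ (j.1:ℤ)) := by
      ext x
      simp only [mem_filter, mem_univ, true_and, mem_union, hfst]
    have hdisj : Disjoint (univ.filter fun j : Fin N => α < (j.1:ℤ) ∧ (j.1:ℤ) ≤ (k2:ℤ) - 1)
        (univ.filter fun j : Fin N => β ≤ (j.1:ℤ)) := by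
      rw [Finset.disjoint_left]
      intro x hx1 hx2
      simp only [mem_filter, mem_univ, true_and] at hx1 hx2
      omega
    rw [e, Finset.card_union_of_disjoint hdisj,
      card_int_interval α k2 hk2N, card_int_ge β (by omega)]
    omega
  have hcost : (∑ j, ((if (χc j).1 then -δ else 0) + (if (χc j).2 then -ε else (0:ℝ))))
      = -((k1:ℝ) * δ) + -((k2:ℝ) * ε) := by
    rw [Finset.sum_add_distrib, cost_sum (fun j => (χc j).1 = true) (-δ),
      cost_sum (fun j => (χc j).2 = true) (-ε), hcount1, hcount2]
    ring
  have hval : Fval δ ε r c c' l m (fun j => n + (j.1:ℤ)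
        + ((if (χc j).1 then (1:ℤ) else 0) - (if (χc j).2 then (1:ℤ) else 0)))
      = taucT δ ε r c c' l m n α β := by
    unfold Fval taucT
    rw [hg]
  refine le_trans ?_ (Finset.le_sup' (fun χ : Fin N → Bool × Bool =>
    Fval δ ε r c c' l m
      (fun j => n + (j.1:ℤ) + ((if (χ j).1 then (1:ℤ) else 0) - (if (χ j).2 then (1:ℤ) else 0)))
      + ∑ j, ((if (χ j).1 then -δ else 0) + (if (χ j).2 then -ε else (0:ℝ)))) (mem_univ χc))
  rw [hval, hcost]
  ring_nf
  exact le_refl _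

lemma claim6 (n : ℤ) :
    tauT δ ε r c c' (l+1) (m-1) n
      = (range (N+1)).sup' nonempty_range_add_one
          (fun k₁ => (range (N+1)).sup' nonempty_range_add_one
            (fun k₂ => PsiT δ ε r c c' l m n k₁ k₂ - (k₁:ℝ) * δ - (k₂:ℝ) * ε)) := by
  have hentry : (Matrix.of fun i j : Fin N => phiT δ ε r c c' i (l+1) (m-1) (n + (j.1:ℤ)))
      = Matrix.of fun i j : Fin N =>
          (univ : Finset (Bool × Bool)).sup' ⟨(false, false), mem_univ _⟩
            (fun t => phiT δ ε r c c' i l m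
                (n + (j.1:ℤ) + ((if t.1 then (1:ℤ) else 0) - (if t.2 then (1:ℤ) else 0)))
              + ((if t.1 then -δ else 0) + (if t.2 then -ε else (0:ℝ)))) := by
    funext i j
    simp only [Matrix.of_apply]
    rw [phi_l δ ε r c c' l (m-1) i (n + (j.1:ℤ)),
      phi_m δ ε r c c' l m i (n + (j.1:ℤ)),
      phi_m δ ε r c c' l m i (n + (j.1:ℤ) + 1),
      ← max_sub_sub_right, sup'_bool2]
    norm_num
    rw [show n + (j.1:ℤ) - 1 = n + (j.1:ℤ) + -1 from by ring]
    ring_nf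
  unfold tauT
  rw [hentry, expand δ ε r c c' l m (K := Bool × Bool) (false, false) n
    (fun t => (if t.1 then (1:ℤ) else 0) - (if t.2 then (1:ℤ) else 0))
    (fun t => (if t.1 then -δ else 0) + (if t.2 then -ε else (0:ℝ)))]
  apply le_antisymm
  · apply Finset.sup'_le
    intro χ _
    set k1 := (univ.filter fun j => (χ j).1 = true).card with hk1
    set k2 := (univ.filter fun j => (χ j).2 = true).card with hk2
    set p := (univ.filter fun j : Fin N => χ j = (true, false)).card with hp
    set q := (univ.filter fun j : Fin N => χ j = (false, true)).card with hq
    set tt := (univ.filter fun j : Fin N => χ j = (true, true)).card with htt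
    have hk1N : k1 ≤ N := le_trans (card_filter_le _ _) (by simp)
    have hk2N : k2 ≤ N := le_trans (card_filter_le _ _) (by simp)
    have hdAC : Disjoint (univ.filter fun j : Fin N => χ j = (true, false))
        (univ.filter fun j : Fin N => χ j = (true, true)) := by
      rw [Finset.disjoint_left]
      intro a ha hb
      simp only [mem_filter, mem_univ, true_and] at ha hb
      rw [ha] at hb
      simp at hb
    have hdBC : Disjoint (univ.filter fun j : Fin N => χ j = (false, true))
        (univ.filter fun j : Fin N => χ j = (true, true)) := by
      rw [Finset.disjoint_left]
      intro a ha hb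
      simp only [mem_filter, mem_univ, true_and] at ha hb
      rw [ha] at hb
      simp at hb
    have hdAB : Disjoint (univ.filter fun j : Fin N => χ j = (true, false))
        (univ.filter fun j : Fin N => χ j = (false, true)) := by
      rw [Finset.disjoint_left]
      intro a ha hb
      simp only [mem_filter, mem_univ, true_and] at ha hb
      rw [ha] at hb
      simp at hb
    have hk1e : k1 = p + tt := by
      have e : (univ.filter fun j : Fin N => (χ j).1 = true)
          = (univ.filter fun j : Fin N => χ j = (true, false))
            ∪ (univ.filter fun j : Fin N => χ j = (true, true)) := by
        ext x
        simp only [mem_filter, mem_univ, true_and, mem_union]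
        rcases hx : χ x with ⟨(_|_), (_|_)⟩ <;> simp [hx]
      rw [hk1, e, Finset.card_union_of_disjoint hdAC, ← hp, ← htt]
    have hk2e : k2 = q + tt := by
      have e : (univ.filter fun j : Fin N => (χ j).2 = true)
          = (univ.filter fun j : Fin N => χ j = (false, true))
            ∪ (univ.filter fun j : Fin N => χ j = (true, true)) := by
        ext x
        simp only [mem_filter, mem_univ, true_and, mem_union]
        rcases hx : χ x with ⟨(_|_), (_|_)⟩ <;> simp [hx]
      rw [hk2, e, Finset.card_union_of_disjoint hdBC, ← hq, ← htt]
    have hpqt : p + q + tt ≤ N := by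
      have e : (univ.filter fun j : Fin N => ¬ (χ j = (false, false)))
          = ((univ.filter fun j : Fin N => χ j = (true, false))
            ∪ (univ.filter fun j : Fin N => χ j = (false, true)))
            ∪ (univ.filter fun j : Fin N => χ j = (true, true)) := by
        ext x
        simp only [mem_filter, mem_univ, true_and, mem_union]
        rcases hx : χ x with ⟨(_|_), (_|_)⟩ <;> simp [hx]
      have hdD : Disjoint ((univ.filter fun j : Fin N => χ j = (true, false))
            ∪ (univ.filter fun j : Fin N => χ j = (false, true)))
          (univ.filter fun j : Fin N => χ j = (true, true)) := by
        rw [Finset.disjoint_left]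
        intro a ha hb
        simp only [mem_union, mem_filter, mem_univ, true_and] at ha hb
        rcases ha with ha | ha <;> rw [ha] at hb <;> simp at hb
      have hc := Finset.card_filter_le (univ : Finset (Fin N))
        (fun j => ¬ (χ j = (false, false)))
      rw [e, Finset.card_union_of_disjoint hdD, Finset.card_union_of_disjoint hdAB,
        ← hp, ← hq, ← htt] at hc
      simpa using hc
    have hcost : (∑ j, ((if (χ j).1 then -δ else 0) + (if (χ j).2 then -ε else (0:ℝ))))
        = -((k1:ℝ) * δ) + -((k2:ℝ) * ε) := by
      rw [Finset.sum_add_distrib, cost_sum (fun j => (χ j).1 = true) (-δ),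
        cost_sum (fun j => (χ j).2 = true) (-ε), ← hk1, ← hk2]
      ring
    have hsort := sort_le δ ε r c c' l m n
      (fun j => (if (χ j).1 then (1:ℤ) else 0) - (if (χ j).2 then (1:ℤ) else 0))
      (fun j => by rcases hx : χ j with ⟨(_|_), (_|_)⟩ <;> simp [hx])
    have hcm1 : (univ.filter fun j : Fin N =>
        ((if (χ j).1 then (1:ℤ) else 0) - (if (χ j).2 then (1:ℤ) else 0)) = -1)
        = univ.filter fun j : Fin N => χ j = (false, true) := by
      ext x
      simp only [mem_filter, mem_univ, true_and]
      rcases hx : χ x with ⟨(_|_), (_|_)⟩ <;> simp [hx]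
    have hcp1 : (univ.filter fun j : Fin N =>
        ((if (χ j).1 then (1:ℤ) else 0) - (if (χ j).2 then (1:ℤ) else 0)) = 1)
        = univ.filter fun j : Fin N => χ j = (true, false) := by
      ext x
      simp only [mem_filter, mem_univ, true_and]
      rcases hx : χ x with ⟨(_|_), (_|_)⟩ <;> simp [hx]
    rw [hcm1, hcp1, ← hp, ← hq] at hsort
    -- now bound taucT (q-1) (N-p) by PsiT k1 k2
    have hPsi : taucT δ ε r c c' l m n ((q:ℤ) - 1) ((N:ℤ) - (p:ℤ))
        ≤ PsiT δ ε r c c' l m n k1 k2 := by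
      unfold PsiT
      split_ifs with h1 h2 h3
      · have hmem : tt ∈ range (k2 + 1) := mem_range.mpr (by omega)
        refine le_trans (le_of_eq ?_) (Finset.le_sup' (fun i : ℕ =>
          taucT δ ε r c c' l m n ((k2:ℤ) - i - 1) ((N:ℤ) - k1 + i)) hmem)
        rw [show ((k2:ℤ) - (tt:ℤ) - 1) = (q:ℤ) - 1 from by omega,
          show ((N:ℤ) - (k1:ℤ) + (tt:ℤ)) = (N:ℤ) - (p:ℤ) from by omega]
      · have hmem : tt ∈ range (k1 + 1) := mem_range.mpr (by omega)
        refine le_trans (le_of_eq ?_) (Finset.le_sup' (fun i : ℕ =>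
          taucT δ ε r c c' l m n ((k2:ℤ) - i - 1) ((N:ℤ) - k1 + i)) hmem)
        rw [show ((k2:ℤ) - (tt:ℤ) - 1) = (q:ℤ) - 1 from by omega,
          show ((N:ℤ) - (k1:ℤ) + (tt:ℤ)) = (N:ℤ) - (p:ℤ) from by omega]
      · have hmem : q ∈ range (N - k1 + 1) := mem_range.mpr (by omega)
        refine le_trans (le_of_eq ?_) (Finset.le_sup' (fun i : ℕ =>
          taucT δ ε r c c' l m n ((i:ℤ) - 1) ((N:ℤ) - k1 + k2 - i)) hmem)
        rw [show ((N:ℤ) - (k1:ℤ) + (k2:ℤ) - (q:ℤ)) = (N:ℤ) - (p:ℤ) from by omega]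
      · have hmem : N - k1 - q ∈ range (N - k2 + 1) := mem_range.mpr (by omega)
        refine le_trans (le_of_eq ?_) (Finset.le_sup' (fun i : ℕ =>
          taucT δ ε r c c' l m n ((N:ℤ) - k1 - i - 1) ((k2:ℤ) + i)) hmem)
        rw [show ((N:ℤ) - (k1:ℤ) - ((N - k1 - q : ℕ):ℤ) - 1) = (q:ℤ) - 1 from by omega,
          show ((k2:ℤ) + ((N - k1 - q : ℕ):ℤ)) = (N:ℤ) - (p:ℤ) from by omega]
    rw [hcost]
    have hmem1 : k1 ∈ range (N+1) := mem_range.mpr (by omega)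
    have hmem2 : k2 ∈ range (N+1) := mem_range.mpr (by omega)
    refine le_trans ?_ (Finset.le_sup' (fun k₁ : ℕ => (range (N+1)).sup' nonempty_range_add_one
      (fun k₂ => PsiT δ ε r c c' l m n k₁ k₂ - (k₁:ℝ) * δ - (k₂:ℝ) * ε)) hmem1)
    refine le_trans ?_ (Finset.le_sup' (fun k₂ : ℕ =>
      PsiT δ ε r c c' l m n k1 k₂ - (k1:ℝ) * δ - (k₂:ℝ) * ε) hmem2)
    have := le_trans hsort hPsi
    linarith [this]
  · apply Finset.sup'_le
    intro k1 hk1mem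
    apply Finset.sup'_le
    intro k2 hk2mem
    have hk1N : k1 ≤ N := by
      have := mem_range.mp hk1mem
      omega
    have hk2N : k2 ≤ N := by
      have := mem_range.mp hk2mem
      omega
    unfold PsiT
    split_ifs with h1 h2 h3
    · rw [sub_sub, sub_le_iff_le_add]
      apply Finset.sup'_le
      intro i hi
      rw [← sub_le_iff_le_add, ← sub_sub]
      have hiK : i ≤ k2 := by
        have := mem_range.mp hi
        omega
      exact ge6 δ ε r c c' l m n k1 k2 hk1N hk2N ((k2:ℤ) - i - 1) ((N:ℤ) - k1 + i)
        (by omega) (by omega) (by omega) (by omega) (by omega) (by omega)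
    · rw [sub_sub, sub_le_iff_le_add]
      apply Finset.sup'_le
      intro i hi
      rw [← sub_le_iff_le_add, ← sub_sub]
      have hiK : i ≤ k1 := by
        have := mem_range.mp hi
        omega
      exact ge6 δ ε r c c' l m n k1 k2 hk1N hk2N ((k2:ℤ) - i - 1) ((N:ℤ) - k1 + i)
        (by omega) (by omega) (by omega) (by omega) (by omega) (by omega)
    · rw [sub_sub, sub_le_iff_le_add]
      apply Finset.sup'_le
      intro i hi
      rw [← sub_le_iff_le_add, ← sub_sub]
      have hiK : i ≤ N - k1 := by
        have := mem_range.mp hi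
        omega
      exact ge6 δ ε r c c' l m n k1 k2 hk1N hk2N ((i:ℤ) - 1) ((N:ℤ) - k1 + k2 - i)
        (by omega) (by omega) (by omega) (by omega) (by omega) (by omega)
    · have h4 : k1 < k2 ∧ (N:ℤ) - k1 < k2 := by
        constructor <;> omega
      rw [sub_sub, sub_le_iff_le_add]
      apply Finset.sup'_le
      intro i hi
      rw [← sub_le_iff_le_add, ← sub_sub]
      have hiK : i ≤ N - k2 := by
        have := mem_range.mp hi
        omega
      exact ge6 δ ε r c c' l m n k1 k2 hk1N hk2N ((N:ℤ) - k1 - i - 1) ((k2:ℤ) + i)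
        (by omega) (by omega) (by omega) (by omega) (by omega) (by omega)

end core

/-- Lemma 4-1: the reductions of the shifted tau functions in the u2D Toda setting. -/
theorem lemma4_1 (N : ℕ) (hN : 1 ≤ N) (δ ε : ℝ) (hδ : 0 < δ) (hε : 0 < ε)
    (r c c' : Fin N → ℝ) (l m n : ℤ) :
    tauT δ ε r c c' (l + 1) m n =
        (Finset.range (N + 1)).sup' Finset.nonempty_range_add_one
          (fun k₁ => taucT δ ε r c c' l m n (-1) ((N : ℤ) - k₁) - (k₁ : ℝ) * δ) ∧
    tauT δ ε r c c' l (m - 1) n =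
        (Finset.range (N + 1)).sup' Finset.nonempty_range_add_one
          (fun k₂ => taucT δ ε r c c' l m n ((k₂ : ℤ) - 1) (N : ℤ) - (k₂ : ℝ) * ε) ∧
    tauT δ ε r c c' (l + 1) m (n - 1) =
        (Finset.range (N + 1)).sup' Finset.nonempty_range_add_one
          (fun k₁ => taucT δ ε r c c' l m n ((N : ℤ) - k₁ - 1) (N : ℤ) - (k₁ : ℝ) * δ) ∧
    tauT δ ε r c c' l (m - 1) (n + 1) =
        (Finset.range (N + 1)).sup' Finset.nonempty_range_add_one
          (fun k₂ => taucT δ ε r c c' l m n (-1) (k₂ : ℤ) - (k₂ : ℝ) * ε) ∧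
    tauT δ ε r c c' l m n = taucT δ ε r c c' l m n (-1) (N : ℤ) ∧
    tauT δ ε r c c' (l + 1) (m - 1) n =
        (Finset.range (N + 1)).sup' Finset.nonempty_range_add_one
          (fun k₁ => (Finset.range (N + 1)).sup' Finset.nonempty_range_add_one
            (fun k₂ => PsiT δ ε r c c' l m n k₁ k₂ - (k₁ : ℝ) * δ - (k₂ : ℝ) * ε)) := by
  exact ⟨claim1 δ ε r c c' l m n, claim2 δ ε r c c' l m n, claim3 δ ε r c c' l m n,
    claim4 δ ε r c c' l m n, claim5 δ ε r c c' l m n, claim6 δ ε r c c' l m n⟩
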